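/- arXiv:2410.01119 — 3 statements merged into one kernel-verified Lean document; each statement's English description precedes it below -/
import Mathlib

section
/- Let A be a unital C*-algebra with projections p₁,…,p_{d²} satisfying ∑ᵢ pᵢ = d·1 and pᵢ pⱼ pᵢ = λ pᵢ for all i ≠ j, where λ = 1/(d+1). Then for any tracial state τ on A, τ(pᵢ) = 1/d for all i. -/
open scoped ComplexOrder

/-!
The trace property and idempotency give `τ (pᵢ pⱼ pᵢ) = τ (pᵢ pⱼ) = τ (pⱼ pᵢ) = τ (pⱼ pᵢ pⱼ)`,
so the relations `pᵢ pⱼ pᵢ = λ pᵢ` and `pⱼ pᵢ pⱼ = λ pⱼ` force `λ τ(pᵢ) = λ τ(pⱼ)`: all the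
`τ(pᵢ)` are equal. Applying `τ` to `∑ pᵢ = d` then gives `d² τ(pᵢ) = d`.
-/

section Tracial

variable {K A : Type*} [Field K] [Semiring A] [Module K A] {τ : A →ₗ[K] K}

theorem trace_mul_mul_of_isIdempotentElem (hτ : ∀ a b, τ (a * b) = τ (b * a)) {p : A}
    (hp : IsIdempotentElem p) (q : A) : τ (p * q * p) = τ (p * q) := by
  rw [hτ, ← mul_assoc, hp.eq]

theorem trace_eq_of_mul_mul_eq_smul (hτ : ∀ a b, τ (a * b) = τ (b * a)) {p q : A}
    (hp : IsIdempotentElem p) (hq : IsIdempotentElem q) {c : K} (hc : c ≠ 0)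
    (hpq : p * q * p = c • p) (hqp : q * p * q = c • q) : τ p = τ q := by
  refine mul_left_cancel₀ hc ?_
  calc c * τ p = τ (p * q * p) := by rw [hpq, map_smul, smul_eq_mul]
    _ = τ (q * p * q) := by
      rw [trace_mul_mul_of_isIdempotentElem hτ hp, trace_mul_mul_of_isIdempotentElem hτ hq, hτ]
    _ = c * τ q := by rw [hqp, map_smul, smul_eq_mul]

theorem card_mul_trace_eq_of_sum_eq_natCast (hτ : ∀ a b, τ (a * b) = τ (b * a))
    (hτ1 : τ 1 = 1) {ι : Type*} [Fintype ι] {p : ι → A} (hp : ∀ i, IsIdempotentElem (p i))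
    {c : K} (hc : c ≠ 0) (hrel : ∀ i j, i ≠ j → p i * p j * p i = c • p i)
    {n : ℕ} (hsum : ∑ i, p i = n) (i : ι) : (Fintype.card ι : K) * τ (p i) = n := by
  have hconst : ∀ j, τ (p j) = τ (p i) := fun j ↦ by
    rcases eq_or_ne j i with rfl | hji
    · rfl
    · exact trace_eq_of_mul_mul_eq_smul hτ (hp j) (hp i) hc (hrel j i hji) (hrel i j hji.symm)
  calc (Fintype.card ι : K) * τ (p i) = ∑ j, τ (p j) := by
        simp only [hconst, Finset.sum_const, Finset.card_univ, nsmul_eq_mul]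
    _ = n := by rw [← map_sum, hsum, ← nsmul_one, map_nsmul, hτ1, nsmul_one]

end Tracial

theorem stmt1_general {A : Type*} [CStarAlgebra A] (d : ℕ)
    (p : Fin (d ^ 2) → A)
    (hid : ∀ i, p i * p i = p i)
    (hsum : ∑ i, p i = (d : A))
    (hrel : ∀ i j, i ≠ j → p i * p j * p i = ((d : ℂ) + 1)⁻¹ • p i)
    (τ : A →ₗ[ℂ] ℂ) (hτ1 : τ 1 = 1)
    (hτtr : ∀ a b : A, τ (a * b) = τ (b * a)) :
    ∀ i, τ (p i) = 1 / d := by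
  intro i
  have hd : (d : ℂ) ≠ 0 := Nat.cast_ne_zero.2 (by rintro rfl; exact i.elim0)
  have key := card_mul_trace_eq_of_sum_eq_natCast hτtr hτ1 hid
    (inv_ne_zero (Nat.cast_add_one_ne_zero d)) hrel hsum i
  rw [Fintype.card_fin, Nat.cast_pow] at key
  rw [eq_div_iff hd]
  exact mul_left_cancel₀ hd (by linear_combination key)

/-- If `p₁,…,p_{d²}` are projections in a unital C*-algebra with `∑ pᵢ = d·1` and
`pᵢpⱼpᵢ = (1/(d+1))pᵢ` for `i ≠ j`, then every tracial state satisfies `τ(pᵢ) = 1/d`. -/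
theorem stmt1 {A : Type*} [CStarAlgebra A] (d : ℕ) (hd : 0 < d)
    (p : Fin (d ^ 2) → A)
    (hsa : ∀ i, IsSelfAdjoint (p i)) (hid : ∀ i, p i * p i = p i)
    (hsum : ∑ i, p i = (d : A))
    (hrel : ∀ i j, i ≠ j → p i * p j * p i = ((d : ℂ) + 1)⁻¹ • p i)
    (τ : A →ₗ[ℂ] ℂ) (hτ1 : τ 1 = 1)
    (hτpos : ∀ a : A, 0 ≤ τ (star a * a))
    (hτtr : ∀ a b : A, τ (a * b) = τ (b * a)) :
    ∀ i, τ (p i) = 1 / d :=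
  stmt1_general d p hid hsum hrel τ hτ1 hτtr
end

section
/- Suppose {P_a^x : 1 ≤ a ≤ d, 1 ≤ x ≤ d+1} ⊆ M_d(ℂ) are such that for each x, {P_a^x}_{a=1}^d is a projection-valued measure (each P_a^x a projection, ∑_a P_a^x = I), and P_a^x P_b^y P_a^x = (1/d) P_a^x whenever x ≠ y. Then each P_a^x has rank one. -/
open Matrix in
lemma rank_eq_one_of_trace_aux (d : ℕ) (A : Matrix (Fin d) (Fin d) ℂ)
    (hA : A.IsHermitian) (h2 : A * A = A) (ht : A.trace = 1) : A.rank = 1 := by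
  classical
  set e := hA.eigenvalues with he
  have hD : star (hA.eigenvectorUnitary : Matrix (Fin d) (Fin d) ℂ) * A *
      (hA.eigenvectorUnitary : Matrix (Fin d) (Fin d) ℂ) = diagonal (RCLike.ofReal ∘ e) := by
    have := hA.conjStarAlgAut_star_eigenvectorUnitary
    simpa [Unitary.conjStarAlgAut_apply] using this
  set U := (hA.eigenvectorUnitary : Matrix (Fin d) (Fin d) ℂ)
  have hUU' : U * star U = 1 := (Matrix.mem_unitaryGroup_iff).mp hA.eigenvectorUnitary.2
  -- eigenvalues are 0 or 1
  have hsq : ∀ i, e i = 0 ∨ e i = 1 := by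
    intro i
    have hDD : (diagonal (RCLike.ofReal ∘ e) : Matrix (Fin d) (Fin d) ℂ) *
        diagonal (RCLike.ofReal ∘ e) = diagonal (RCLike.ofReal ∘ e) := by
      rw [← hD]
      calc (star U * A * U) * (star U * A * U)
          = star U * (A * (U * star U) * A) * U := by
            simp only [mul_assoc]
        _ = star U * A * U := by rw [hUU', mul_one, h2]
    have h0 := congrArg (fun M => M i i) hDD
    simp only [diagonal_mul_diagonal, diagonal_apply_eq, Function.comp] at h0
    have h1 : (e i : ℂ) * e i = e i := by simpa using h0
    have h' : e i * e i = e i := by exact_mod_cast h1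
    have h'' : e i * (e i - 1) = 0 := by rw [mul_sub, h', mul_one, sub_self]
    rcases mul_eq_zero.mp h'' with h | h
    · exact Or.inl h
    · exact Or.inr (by linarith [sub_eq_zero.mp h])
  -- trace = sum of eigenvalues
  have htr : (∑ i, (e i : ℂ)) = 1 := by
    have : (diagonal (RCLike.ofReal ∘ e) : Matrix (Fin d) (Fin d) ℂ).trace = A.trace := by
      rw [← hD, Matrix.trace_mul_cycle, hUU', one_mul]
    rw [Matrix.trace_diagonal] at this
    simpa [ht] using this
  have htrR : (∑ i, e i) = 1 := by
    exact_mod_cast (by push_cast at htr ⊢; exact_mod_cast htr : ((∑ i, e i : ℝ) : ℂ) = 1)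
  -- rank = card of nonzero eigenvalues
  rw [hA.rank_eq_card_non_zero_eigs]
  have : (∑ i, e i) = (Fintype.card {i // e i ≠ 0} : ℝ) := by
    rw [Fintype.card_subtype, Finset.card_filter]
    push_cast
    apply Finset.sum_congr rfl
    intro i _
    rcases hsq i with h | h <;> simp [h]
  rw [htrR] at this
  have h1 : (Fintype.card {i // e i ≠ 0} : ℝ) = 1 := this.symm
  exact_mod_cast h1

/-- If `{Pₐˣ} ⊆ M_d(ℂ)` form `d+1` projection-valued measures with
`Pₐˣ P_bʸ Pₐˣ = (1/d) Pₐˣ` for `x ≠ y`, then each `Pₐˣ` has rank one. -/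
theorem stmt4 (d : ℕ) (hd : 0 < d)
    (P : Fin d → Fin (d + 1) → Matrix (Fin d) (Fin d) ℂ)
    (hherm : ∀ a x, (P a x).IsHermitian)
    (hid : ∀ a x, P a x * P a x = P a x)
    (hsum : ∀ x, ∑ a, P a x = 1)
    (hrel : ∀ a b x y, x ≠ y → P a x * P b y * P a x = ((d : ℂ))⁻¹ • P a x) :
    ∀ a x, (P a x).rank = 1 := by
  have hdC : (d : ℂ) ≠ 0 := Nat.cast_ne_zero.mpr hd.ne'
  have key : ∀ a b x y, x ≠ y →
      (P a x * P b y).trace = (d : ℂ)⁻¹ * (P a x).trace := by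
    intro a b x y hxy
    have h := congrArg Matrix.trace (hrel a b x y hxy)
    rw [Matrix.trace_smul] at h
    rw [Matrix.trace_mul_cycle] at h
    rw [hid a x] at h
    simpa using h
  have heq : ∀ a b x y, x ≠ y → (P a x).trace = (P b y).trace := by
    intro a b x y hxy
    have h1 := key a b x y hxy
    have h2 := key b a y x hxy.symm
    rw [Matrix.trace_mul_comm] at h2
    rw [h1] at h2
    exact (mul_left_cancel₀ (inv_ne_zero hdC) h2.symm).symm
  have htr : ∀ a x, (P a x).trace = 1 := by
    intro a x
    haveI : Nontrivial (Fin (d+1)) := Fin.nontrivial_iff_two_le.mpr (by omega)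
    obtain ⟨y, hy⟩ := exists_ne x
    have hall : ∀ c : Fin d, (P c x).trace = (P a x).trace := by
      intro c
      rw [heq c a x y (Ne.symm hy), heq a a x y (Ne.symm hy)]
    have hs : (∑ c, (P c x).trace) = (d : ℂ) := by
      rw [← Matrix.trace_sum, hsum x, Matrix.trace_one]
      simp
    rw [Finset.sum_congr rfl (fun c _ => hall c)] at hs
    simp only [Finset.sum_const, Finset.card_univ, Fintype.card_fin, nsmul_eq_mul] at hs
    field_simp at hs
    exact hs
  exact fun a x => rank_eq_one_of_trace_aux d (P a x) (hherm a x) (hid a x) (htr a x)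
end

section
/- Let P ∈ B(H) be an orthogonal projection and T = T* a bounded self-adjoint operator on a Hilbert space H. Then P T P ≥ 0 if and only if for every ε > 0 there exists t > 0 such that T + εP + t(I − P) ≥ 0. -/
open scoped InnerProductSpace
open RCLike ContinuousLinearMap

/-- For a projection `P` and self-adjoint `T` in `B(H)`: `P T P ≥ 0` iff for every
`ε > 0` there is `t > 0` with `T + εP + t(I − P) ≥ 0`. -/
theorem stmt7 {H : Type*} [NormedAddCommGroup H] [InnerProductSpace ℂ H] [CompleteSpace H]
    (P T : H →L[ℂ] H) (hP : IsSelfAdjoint P) (hP2 : P ∘L P = P) (hT : IsSelfAdjoint T) :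
    (P ∘L T ∘L P).IsPositive ↔
      ∀ ε : ℝ, 0 < ε → ∃ t : ℝ, 0 < t ∧ (T + ε • P + t • (1 - P)).IsPositive := by
  have hadj : ∀ y z : H, ⟪P y, z⟫_ℂ = ⟪y, P z⟫_ℂ := by
    intro y z
    nth_rewrite 2 [← ContinuousLinearMap.isSelfAdjoint_iff'.mp hP]
    rw [ContinuousLinearMap.adjoint_inner_right]
  have hPP : ∀ y : H, P (P y) = P y := fun y =>
    congrFun (congrArg DFunLike.coe hP2) y
  have hres : ∀ (r : ℝ) (y z : H), re ⟪r • y, z⟫_ℂ = r * re ⟪y, z⟫_ℂ := by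
    intro r y z
    rw [RCLike.real_smul_eq_coe_smul (K := ℂ) r y, inner_smul_real_left, RCLike.smul_re]
  have hPx : ∀ x : H, re ⟪P x, x⟫_ℂ = ‖P x‖ ^ 2 := by
    intro x
    have h0 : ⟪P x, x⟫_ℂ = ⟪P x, P x⟫_ℂ := by
      nth_rewrite 1 [← hPP x]
      rw [hadj]
    rw [h0, inner_self_eq_norm_sq]
  constructor
  · intro hpos ε hε
    refine ⟨‖T‖ + ‖T‖ ^ 2 / ε + 1, by positivity, ?_⟩
    have hsa : IsSelfAdjoint (T + ε • P + (‖T‖ + ‖T‖ ^ 2 / ε + 1) • (1 - P)) :=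
      (hT.add (IsSelfAdjoint.smul (star_trivial (ε : ℝ)) hP)).add
        (IsSelfAdjoint.smul (star_trivial (‖T‖ + ‖T‖ ^ 2 / ε + 1 : ℝ))
          ((IsSelfAdjoint.one (H →L[ℂ] H)).sub hP))
    refine ⟨hsa.isSymmetric, fun x => ?_⟩
    have hPu : P (P x) = P x := hPP x
    have hPv : P (x - P x) = 0 := by simp [map_sub, hPP]
    have key : ∀ y z : H, |re ⟪T y, z⟫_ℂ| ≤ ‖T‖ * ‖y‖ * ‖z‖ := by
      intro y z
      calc |re ⟪T y, z⟫_ℂ| ≤ ‖⟪T y, z⟫_ℂ‖ := RCLike.abs_re_le_norm _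
        _ ≤ ‖T y‖ * ‖z‖ := norm_inner_le_norm _ _
        _ ≤ ‖T‖ * ‖y‖ * ‖z‖ := by
            have := T.le_opNorm y
            have hz : (0:ℝ) ≤ ‖z‖ := norm_nonneg z
            nlinarith
    have h1 : 0 ≤ re ⟪T (P x), P x⟫_ℂ := by
      have := hpos.2 x
      rwa [reApplyInnerSelf_apply, ContinuousLinearMap.comp_apply,
        ContinuousLinearMap.comp_apply, hadj] at this
    have h2 := abs_le.mp (key (P x) (x - P x))
    have h3 := abs_le.mp (key (x - P x) (P x))
    have h4 := abs_le.mp (key (x - P x) (x - P x))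
    rw [reApplyInnerSelf_apply]
    have hQx : re ⟪x - P x, x⟫_ℂ = ‖x - P x‖ ^ 2 := by
      have h5 : ⟪x - P x, P x⟫_ℂ = 0 := by
        rw [← hadj, hPv, inner_zero_left]
      have h0 : ⟪x - P x, x⟫_ℂ = ⟪x - P x, x - P x⟫_ℂ := by
        rw [inner_sub_right, h5, sub_zero]
      rw [h0, inner_self_eq_norm_sq]
    have hTx : re ⟪T x, x⟫_ℂ
        = re ⟪T (P x), P x⟫_ℂ + re ⟪T (P x), x - P x⟫_ℂ
          + re ⟪T (x - P x), P x⟫_ℂ + re ⟪T (x - P x), x - P x⟫_ℂ := by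
      have hx : x = P x + (x - P x) := by abel
      conv_lhs => rw [hx]
      rw [map_add, inner_add_left, inner_add_right, inner_add_right, map_add, map_add, map_add]
      ring
    have hexp : ∀ s : ℝ, re ⟪(T + ε • P + s • (1 - P)) x, x⟫_ℂ
        = re ⟪T x, x⟫_ℂ + ε * ‖P x‖ ^ 2 + s * ‖x - P x‖ ^ 2 := by
      intro s
      rw [ContinuousLinearMap.add_apply, ContinuousLinearMap.add_apply,
        ContinuousLinearMap.smul_apply, ContinuousLinearMap.smul_apply,
        ContinuousLinearMap.sub_apply, ContinuousLinearMap.one_apply,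
        inner_add_left, inner_add_left, map_add, map_add, hres, hres, hPx, hQx]
    rw [hexp _, hTx]
    have hN : (0:ℝ) ≤ ‖T‖ := norm_nonneg T
    have hdiv : ε * (‖T‖ ^ 2 / ε) = ‖T‖ ^ 2 := by field_simp
    have ha : (0:ℝ) ≤ ‖P x‖ := norm_nonneg _
    have hb : (0:ℝ) ≤ ‖x - P x‖ := norm_nonneg _
    nlinarith [sq_nonneg (ε * ‖P x‖ - ‖T‖ * ‖x - P x‖), mul_pos hε hε, sq_nonneg ‖x - P x‖,
      mul_nonneg hb hb, mul_nonneg (mul_nonneg hN ha) hb]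
  · intro h
    constructor
    · have hsa : IsSelfAdjoint (P ∘L (T ∘L P)) := by
        rw [ContinuousLinearMap.isSelfAdjoint_iff'] at *
        rw [ContinuousLinearMap.adjoint_comp, ContinuousLinearMap.adjoint_comp, hP, hT]
        rw [← ContinuousLinearMap.comp_assoc]
      rw [← ContinuousLinearMap.comp_assoc] at hsa
      exact hsa.isSymmetric
    · intro x
      rw [reApplyInnerSelf_apply, ContinuousLinearMap.comp_apply,
        ContinuousLinearMap.comp_apply, hadj]
      set a : ℝ := re ⟪T (P x), P x⟫_ℂ with haa
      by_contra hlt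
      push_neg at hlt
      obtain ⟨ε, hε, hεa⟩ : ∃ ε : ℝ, 0 < ε ∧ ε * ‖P x‖ ^ 2 < -a := by
        refine ⟨(-a) / (2 * (‖P x‖ ^ 2 + 1)), div_pos (by linarith) (by positivity), ?_⟩
        rw [div_mul_eq_mul_div, div_lt_iff₀ (by positivity)]
        nlinarith [sq_nonneg ‖P x‖]
      obtain ⟨t, ht, hpos⟩ := h ε hε
      have hge := hpos.2 (P x)
      rw [reApplyInnerSelf_apply] at hge
      have hval : re ⟪(T + ε • P + t • (1 - P)) (P x), P x⟫_ℂ = a + ε * ‖P x‖ ^ 2 := by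
        rw [ContinuousLinearMap.add_apply, ContinuousLinearMap.add_apply,
          ContinuousLinearMap.smul_apply, ContinuousLinearMap.smul_apply,
          ContinuousLinearMap.sub_apply, ContinuousLinearMap.one_apply, hPP x, sub_self,
          smul_zero, add_zero, inner_add_left, map_add, hres, inner_self_eq_norm_sq]
      rw [hval] at hge
      linarith
end
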